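/- arXiv:1308.1468 — 4 statements merged into one kernel-verified Lean document; each statement's English description precedes it below -/
import Mathlib

section
/- For a finite group K and a fixed non-identity element g of K, the number of sequences (k_1,...,k_N) in (K \ {1})^N whose product k_1 k_2 ... k_N equals g is ((|K|-1)^N - (-1)^N)/|K|. -/
open Finset

lemma aux_card_all_ne (K : Type*) [Group K] [Fintype K] [DecidableEq K] (N : ℕ) :
    (Finset.univ.filter (fun f : Fin N → K => ∀ i, f i ≠ 1)).card
      = (Fintype.card K - 1) ^ N := by
  have h : (Finset.univ.filter (fun f : Fin N → K => ∀ i, f i ≠ 1))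
      = Fintype.piFinset (fun _ : Fin N => Finset.univ.erase (1 : K)) := by
    ext f
    simp [Fintype.mem_piFinset]
  rw [h, Fintype.card_piFinset]
  simp [Finset.card_erase_of_mem, Finset.card_univ]

lemma aux_cnt (K : Type*) [Group K] [Fintype K] [DecidableEq K] (N : ℕ) :
    ∀ g : K, g ≠ 1 →
    ((Finset.univ.filter
        (fun f : Fin N → K => (∀ i, f i ≠ 1) ∧ (List.ofFn f).prod = g)).card : ℤ)
      * (Fintype.card K : ℤ)
    = ((Fintype.card K : ℤ) - 1) ^ N - (-1 : ℤ) ^ N := by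
  induction N with
  | zero =>
    intro g hg
    have : (Finset.univ.filter
        (fun f : Fin 0 → K => (∀ i, f i ≠ 1) ∧ (List.ofFn f).prod = g)) = ∅ := by
      apply Finset.filter_eq_empty_iff.mpr
      intro f _
      simp only [List.ofFn_zero, List.prod_nil, not_and]
      exact fun _ h => hg h.symm
    rw [this]
    simp
  | succ n ih =>
    intro g hg
    -- bijection between length (n+1) sequences with product g
    -- and length n sequences with product ≠ g
    have hbij :
        (Finset.univ.filter
          (fun f : Fin (n+1) → K => (∀ i, f i ≠ 1) ∧ (List.ofFn f).prod = g)).card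
        = (Finset.univ.filter
          (fun f : Fin n → K => (∀ i, f i ≠ 1) ∧ (List.ofFn f).prod ≠ g)).card := by
      apply Finset.card_bij (fun f _ => Fin.init f)
      · intro f hf
        simp only [Finset.mem_filter, Finset.mem_univ, true_and] at hf ⊢
        obtain ⟨h1, h2⟩ := hf
        have hofn : (List.ofFn f).prod
            = (List.ofFn (Fin.init f)).prod * f (Fin.last n) := by
          rw [List.ofFn_succ', List.prod_concat]; rfl
        constructor
        · intro i; exact h1 _
        · intro hcon
          apply h1 (Fin.last n)
          rw [hofn, hcon] at h2
          exact mul_left_cancel (a := g) (by simpa using h2)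
      · intro f hf f' hf' h
        simp only [Finset.mem_filter, Finset.mem_univ, true_and] at hf hf'
        have hofn : ∀ F : Fin (n+1) → K, (List.ofFn F).prod
            = (List.ofFn (Fin.init F)).prod * F (Fin.last n) := by
          intro F; rw [List.ofFn_succ', List.prod_concat]; rfl
        have hlast : f (Fin.last n) = f' (Fin.last n) := by
          have e1 := hofn f
          have e2 := hofn f'
          rw [hf.2] at e1; rw [hf'.2] at e2
          rw [h] at e1
          have := e1.symm.trans e2
          exact mul_left_cancel this
        funext i
        rcases Fin.eq_castSucc_or_eq_last i with ⟨j, rfl⟩ | rfl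
        · exact congrFun h j
        · exact hlast
      · intro f hf
        simp only [Finset.mem_filter, Finset.mem_univ, true_and] at hf
        refine ⟨Fin.snoc f ((List.ofFn f).prod⁻¹ * g), ?_, ?_⟩
        · simp only [Finset.mem_filter, Finset.mem_univ, true_and]
          have hofn : (List.ofFn (Fin.snoc f ((List.ofFn f).prod⁻¹ * g) : Fin (n+1) → K)).prod
              = (List.ofFn f).prod * ((List.ofFn f).prod⁻¹ * g) := by
            rw [List.ofFn_succ', List.prod_concat]
            simp
          constructor
          · intro i
            rcases Fin.eq_castSucc_or_eq_last i with ⟨j, rfl⟩ | rfl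
            · simpa using hf.1 j
            · simp only [Fin.snoc_last]
              intro hcon
              apply hf.2
              have : (List.ofFn f).prod * ((List.ofFn f).prod⁻¹ * g) = (List.ofFn f).prod := by
                rw [hcon, mul_one]
              rw [← mul_assoc, mul_inv_cancel, one_mul] at this
              exact this.symm
          · rw [hofn, ← mul_assoc, mul_inv_cancel, one_mul]
        · funext j
          simp [Fin.init]
    -- split: sequences with entries ≠ 1 = (prod = g) ∪ (prod ≠ g)
    have hsplit :
        (Finset.univ.filter
          (fun f : Fin n → K => (∀ i, f i ≠ 1) ∧ (List.ofFn f).prod ≠ g)).card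
        + (Finset.univ.filter
          (fun f : Fin n → K => (∀ i, f i ≠ 1) ∧ (List.ofFn f).prod = g)).card
        = (Fintype.card K - 1) ^ n := by
      rw [← aux_card_all_ne K n]
      rw [← Finset.card_filter_add_card_filter_not
        (s := Finset.univ.filter (fun f : Fin n → K => ∀ i, f i ≠ 1))
        (p := fun f => (List.ofFn f).prod = g)]
      rw [Finset.filter_filter, Finset.filter_filter]
      ring
    have hK : 1 ≤ Fintype.card K := Fintype.card_pos
    have hcast : ((Fintype.card K - 1 : ℕ) : ℤ) = (Fintype.card K : ℤ) - 1 := by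
      exact Nat.cast_sub hK
    have ihg := ih g hg
    have hsplitZ :
        ((Finset.univ.filter
          (fun f : Fin n → K => (∀ i, f i ≠ 1) ∧ (List.ofFn f).prod ≠ g)).card : ℤ)
        = ((Fintype.card K : ℤ) - 1) ^ n
          - ((Finset.univ.filter
            (fun f : Fin n → K => (∀ i, f i ≠ 1) ∧ (List.ofFn f).prod = g)).card : ℤ) := by
      have := congrArg (Nat.cast : ℕ → ℤ) hsplit
      push_cast [hcast] at this
      linarith
    rw [hbij, hsplitZ]
    have hKne : (Fintype.card K : ℤ) ≠ 0 := by positivity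
    have : (((Fintype.card K : ℤ) - 1) ^ n
        - ((Finset.univ.filter
          (fun f : Fin n → K => (∀ i, f i ≠ 1) ∧ (List.ofFn f).prod = g)).card : ℤ))
        * (Fintype.card K : ℤ)
        = ((Fintype.card K : ℤ) - 1) ^ n * (Fintype.card K : ℤ)
          - (((Fintype.card K : ℤ) - 1) ^ n - (-1 : ℤ) ^ n) := by
      rw [← ihg]; ring
    rw [this]
    ring

/-- For a finite group `K` and a fixed non-identity element `g`, the number of
sequences `(k_1,...,k_N)` in `(K \ {1})^N` with product `g` equals
`((|K|-1)^N - (-1)^N)/|K|`. -/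
theorem stmt0 (K : Type*) [Group K] [Fintype K] [DecidableEq K]
    (g : K) (hg : g ≠ 1) (N : ℕ) :
    ((Finset.univ.filter
        (fun f : Fin N → K => (∀ i, f i ≠ 1) ∧ (List.ofFn f).prod = g)).card : ℤ)
      * (Fintype.card K : ℤ)
    = ((Fintype.card K : ℤ) - 1) ^ N - (-1 : ℤ) ^ N := by
  exact aux_cnt K N g hg
end

section
/- Let t ∈ GL_n(F_q) be a semisimple reflection with fixed hyperplane H and det(t)-eigenline L, and let α = (α_1,...,α_m) be a composition of n. Then a complete α-flag {0} ⊂ V_{α_1} ⊂ V_{α_1+α_2} ⊂ ··· ⊂ F_q^n is stabilized by t if and only if there exists an index i such that V_{α_1+···+α_j} ⊆ H for all j < i and L ⊆ V_{α_1+···+α_j} for all j ≥ i. Consequently the number of t-stable α-flags equals the sum over i = 1,...,m of the Gaussian multinomial [n−1 choose α − e_i]_q. -/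
/-- An `α`-flag in `F^n` for a composition `α = (α_1,…,α_m)`: an increasing chain
of subspaces `V_j` with `dim V_j = α_1 + ⋯ + α_{j+1}` (so the last one is all of
`F^n` when `Σ α = n`). -/
def IsFlag {F : Type*} [Field F] {m n : ℕ} (α : Fin m → ℕ)
    (V : Fin m → Submodule F (Fin n → F)) : Prop :=
  Monotone V ∧
    ∀ j : Fin m, Module.finrank F (V j) = ∑ i ∈ Finset.univ.filter (· ≤ j), α i

/-!
Write `v = h + l` with `h ∈ H`, `l ∈ L`; then `t v = v + (det t - 1) • l`. Hence a subspace `W` is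
`t`-stable iff `W ≤ H` or `L ≤ W`, since otherwise `W ⊓ L = ⊥` as `L` is a line. Along a flag
ending in the whole space the members containing `L` form a final segment, starting at an index
`i` which is unique because `L ⊄ H`. For a fixed `i`, pulling back along an isomorphism
`F^(n-1) ≅ H` is a bijection from the flags split at `i` onto the `(α - e_i)`-flags of
`F^(n-1)`, with inverse `W_j ↦ W_j ⊕ L` for `j ≥ i` and `W_j ↦ W_j` for `j < i`; the modular law
does the bookkeeping.
-/

open Module Submodule

theorem Nat.card_subtype_exists_eq_sum {ι α : Type*} [Fintype ι] [Finite α] (P : ι → α → Prop)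
    (hP : ∀ a i i', P i a → P i' a → i = i') :
    Nat.card {a // ∃ i, P i a} = ∑ i, Nat.card {a // P i a} := by
  rw [← Nat.card_sigma]
  refine Nat.card_congr (Equiv.ofBijective (fun x => ⟨x.2.1, x.1, x.2.2⟩) ⟨?_, ?_⟩).symm
  · rintro ⟨i, a, ha⟩ ⟨i', a', ha'⟩ h
    obtain rfl : a = a' := congrArg Subtype.val h
    obtain rfl : i = i' := hP a i i' ha ha'
    rfl
  · rintro ⟨a, i, ha⟩
    exact ⟨⟨i, a, ha⟩, rfl⟩

theorem Finset.sum_ite_sub_one_add {ι : Type*} [DecidableEq ι] (s : Finset ι) (α : ι → ℕ) {i : ι}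
    (hi : 0 < α i) :
    ∑ k ∈ s, (if k = i then α k - 1 else α k) + (if i ∈ s then 1 else 0) = ∑ k ∈ s, α k := by
  rw [← Finset.sum_ite_eq' s i (fun _ => 1), ← Finset.sum_add_distrib]
  refine Finset.sum_congr rfl fun k _ => ?_
  split_ifs with hk
  · subst hk; omega
  · rfl

def IsSplitAt {ι α : Type*} [Preorder ι] [LE α] (a b : α) (V : ι → α) (i : ι) : Prop :=
  (∀ j, j < i → V j ≤ a) ∧ ∀ j, i ≤ j → b ≤ V j

section IsSplitAt

variable {ι α : Type*} [LinearOrder ι] [Preorder α] {a b : α} {V : ι → α} {i i' : ι}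

theorem IsSplitAt.le_or_le (h : IsSplitAt a b V i) (j : ι) : V j ≤ a ∨ b ≤ V j :=
  (lt_or_ge j i).imp (h.1 j) (h.2 j)

theorem IsSplitAt.unique (hba : ¬ b ≤ a) (h : IsSplitAt a b V i) (h' : IsSplitAt a b V i') :
    i = i' := by
  have key : ∀ {i i'}, IsSplitAt a b V i → IsSplitAt a b V i' → i ≤ i' :=
    fun h h' => not_lt.mp fun hlt => hba ((h'.2 _ le_rfl).trans (h.1 _ hlt))
  exact le_antisymm (key h h') (key h' h)

theorem exists_isSplitAt [WellFoundedLT ι] (hV : Monotone V) (hV' : ∀ j, V j ≤ a ∨ b ≤ V j)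
    (hb : ∃ j, b ≤ V j) : ∃ i, IsSplitAt a b V i := by
  obtain ⟨i, hi, hmin⟩ := wellFounded_lt.has_min {j | b ≤ V j} hb
  exact ⟨i, fun j hj => (hV' j).resolve_right fun hbj => hmin j hbj hj,
    fun j hij => le_trans hi (hV hij)⟩

end IsSplitAt

section Reflection

variable {K E : Type*} [Field K] [AddCommGroup E] [Module K E] {T : E →ₗ[K] E} {d : K}
  {H L W : Submodule K E}

theorem disjoint_of_fixed_of_eigen (hd : d ≠ 1) (hfix : ∀ v ∈ H, T v = v)
    (heig : ∀ v ∈ L, T v = d • v) : Disjoint H L := by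
  rw [Submodule.disjoint_def]
  intro v hvH hvL
  have : (d - 1) • v = 0 := by rw [sub_smul, one_smul, ← heig v hvL, hfix v hvH, sub_self]
  exact (smul_eq_zero.mp this).resolve_left (sub_ne_zero.mpr hd)

theorem apply_add_of_fixed_of_eigen (hfix : ∀ v ∈ H, T v = v) (heig : ∀ v ∈ L, T v = d • v)
    {h l : E} (hh : h ∈ H) (hl : l ∈ L) : T (h + l) = h + l + (d - 1) • l := by
  rw [map_add, hfix h hh, heig l hl, sub_smul, one_smul]
  abel

theorem forall_mem_apply_mem_iff (hd : d ≠ 1) (hsup : H ⊔ L = ⊤) (hL : IsAtom L)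
    (hfix : ∀ v ∈ H, T v = v) (heig : ∀ v ∈ L, T v = d • v) :
    (∀ v ∈ W, T v ∈ W) ↔ W ≤ H ∨ L ≤ W := by
  have hdecomp : ∀ v, ∃ h ∈ H, ∃ l ∈ L, h + l = v := fun v =>
    Submodule.mem_sup.mp (hsup ▸ Submodule.mem_top (x := v))
  constructor
  · intro hW
    refine or_iff_not_imp_right.mpr fun hLW v hv => ?_
    obtain ⟨h, hh, l, hl, rfl⟩ := hdecomp v
    have hlW : (d - 1) • l ∈ W := by
      simpa [apply_add_of_fixed_of_eigen hfix heig hh hl] using sub_mem (hW _ hv) hv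
    have hWL : W ⊓ L = ⊥ := (hL.le_iff.mp inf_le_right).resolve_right (hLW <| · ▸ inf_le_left)
    have hl0 : l = 0 := by
      have : (d - 1) • l = 0 := (Submodule.eq_bot_iff _).mp hWL _ ⟨hlW, L.smul_mem _ hl⟩
      exact (smul_eq_zero.mp this).resolve_left (sub_ne_zero.mpr hd)
    simpa [hl0] using hh
  · rintro (hWH | hLW) v hv
    · rwa [hfix v (hWH hv)]
    · obtain ⟨h, hh, l, hl, rfl⟩ := hdecomp v
      rw [apply_add_of_fixed_of_eigen hfix heig hh hl]
      exact add_mem hv (W.smul_mem _ (hLW hl))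

theorem forall_mem_apply_mem_iff_exists_isSplitAt {ι : Type*} [LinearOrder ι] [WellFoundedLT ι]
    {V : ι → Submodule K E} (hV : Monotone V) (htop : ∃ j, V j = ⊤) (hd : d ≠ 1)
    (hsup : H ⊔ L = ⊤) (hL : IsAtom L) (hfix : ∀ v ∈ H, T v = v)
    (heig : ∀ v ∈ L, T v = d • v) :
    (∀ j, ∀ v ∈ V j, T v ∈ V j) ↔ ∃ i, IsSplitAt H L V i := by
  simp only [forall_mem_apply_mem_iff hd hsup hL hfix heig]
  refine ⟨fun h => exists_isSplitAt hV h ?_, fun ⟨i, hi⟩ => hi.le_or_le⟩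
  obtain ⟨j, hj⟩ := htop
  exact ⟨j, hj ▸ le_top⟩

end Reflection

section Lift

variable {K E E' : Type*} [Field K] [AddCommGroup E] [Module K E] [AddCommGroup E']
  [Module K E'] {ψ : E' →ₗ[K] E} {X B : Submodule K E}

theorem comap_map_sup_of_disjoint (hψ : Function.Injective ψ) (hX : Disjoint X (LinearMap.range ψ))
    (A : Submodule K E') : (map ψ A ⊔ X).comap ψ = A := by
  apply map_injective_of_injective hψ
  rw [map_comap_eq, inf_comm, sup_inf_assoc_of_le X LinearMap.map_le_range, hX.eq_bot, sup_bot_eq]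

theorem map_comap_sup_of_le (hXB : X ≤ B) (hB : B ≤ LinearMap.range ψ ⊔ X) :
    map ψ (B.comap ψ) ⊔ X = B := by
  rw [map_comap_eq, sup_comm, ← sup_inf_assoc_of_le _ hXB, sup_comm, inf_eq_right.mpr hB]

theorem finrank_map_sup_of_disjoint [FiniteDimensional K E] (hψ : Function.Injective ψ)
    (hX : Disjoint X (LinearMap.range ψ)) (A : Submodule K E') :
    finrank K ↥(map ψ A ⊔ X) = finrank K A + finrank K X := by
  have hinf : map ψ A ⊓ X = ⊥ := (hX.symm.mono_left LinearMap.map_le_range).eq_bot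
  have := Submodule.finrank_sup_add_finrank_inf_eq (map ψ A) X
  rwa [hinf, finrank_bot, add_zero, ← (equivMapOfInjective ψ hψ A).finrank_eq] at this

theorem exists_injective_range_eq [FiniteDimensional K E] {H : Submodule K E} {k : ℕ}
    (hH : finrank K H = k) :
    ∃ ψ : (Fin k → K) →ₗ[K] E, Function.Injective ψ ∧ LinearMap.range ψ = H := by
  let φ := LinearEquiv.ofFinrankEq (Fin k → K) H (by rw [finrank_fin_fun, hH])
  refine ⟨H.subtype ∘ₗ φ.toLinearMap, H.injective_subtype.comp φ.injective, ?_⟩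
  rw [LinearMap.range_comp, LinearEquiv.range, Submodule.map_top, range_subtype]

end Lift

section LineFrom

variable {ι K E : Type*} [LinearOrder ι] [Field K] [AddCommGroup E] [Module K E]
  {H L : Submodule K E} {V : ι → Submodule K E} {i : ι}

def lineFrom (L : Submodule K E) (i j : ι) : Submodule K E :=
  if i ≤ j then L else ⊥

theorem lineFrom_mono : Monotone (lineFrom L i) := by
  intro a b hab
  unfold lineFrom
  split_ifs with ha hb
  exacts [le_rfl, absurd (ha.trans hab) hb, bot_le, le_rfl]

theorem disjoint_lineFrom (hL : Disjoint L H) (j : ι) : Disjoint (lineFrom L i j) H := by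
  unfold lineFrom
  split_ifs
  exacts [hL, disjoint_bot_left]

theorem finrank_lineFrom (hL : finrank K L = 1) (j : ι) :
    finrank K (lineFrom L i j) = if i ≤ j then 1 else 0 := by
  by_cases hij : i ≤ j
  · rw [show lineFrom L i j = L from if_pos hij, if_pos hij, hL]
  · rw [show lineFrom L i j = ⊥ from if_neg hij, if_neg hij, finrank_bot]

theorem IsSplitAt.lineFrom_le (h : IsSplitAt H L V i) (j : ι) : lineFrom L i j ≤ V j := by
  unfold lineFrom
  split_ifs with hij
  exacts [h.2 j hij, bot_le]

theorem IsSplitAt.le_sup_lineFrom (hsup : H ⊔ L = ⊤) (h : IsSplitAt H L V i) (j : ι) :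
    V j ≤ H ⊔ lineFrom L i j := by
  unfold lineFrom
  split_ifs with hij
  · exact hsup ▸ le_top
  · exact (h.1 j (not_le.mp hij)).trans le_sup_left

end LineFrom

section Flags

variable {F : Type*} [Field F] {m n k : ℕ} {α : Fin m → ℕ} {L : Submodule F (Fin n → F)}
  {ψ : (Fin k → F) →ₗ[F] (Fin n → F)} {i : Fin m}

theorem IsFlag.eq_top {V : Fin m → Submodule F (Fin n → F)} (hV : IsFlag α V)
    (hsum : ∑ i, α i = n) {j : Fin m} (hj : ∀ i, i ≤ j) : V j = ⊤ := by
  apply Submodule.eq_top_of_finrank_eq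
  rw [hV.2 j, Finset.filter_true_of_mem fun i _ => hj i, hsum, finrank_fin_fun]

theorem isFlag_map_sup_lineFrom_iff (hψ : Function.Injective ψ)
    (hL : Disjoint L (LinearMap.range ψ)) (hL1 : finrank F L = 1) (hi : 0 < α i)
    (W : Fin m → Submodule F (Fin k → F)) :
    IsFlag α (fun j => map ψ (W j) ⊔ lineFrom L i j) ↔
      IsFlag (fun j => if j = i then α j - 1 else α j) W := by
  have hcomap : ∀ j, (map ψ (W j) ⊔ lineFrom L i j).comap ψ = W j := fun j =>
    comap_map_sup_of_disjoint hψ (disjoint_lineFrom hL j) _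
  have hdim : ∀ j, finrank F ↥(map ψ (W j) ⊔ lineFrom L i j) =
      finrank F (W j) + if i ≤ j then 1 else 0 := fun j => by
    rw [finrank_map_sup_of_disjoint hψ (disjoint_lineFrom hL j), finrank_lineFrom hL1]
  have hsum : ∀ j, ∑ k ∈ Finset.univ.filter (· ≤ j), α k =
      ∑ k ∈ Finset.univ.filter (· ≤ j), (if k = i then α k - 1 else α k) +
        if i ≤ j then 1 else 0 := fun j => by
    simpa using (Finset.sum_ite_sub_one_add (Finset.univ.filter (· ≤ j)) α hi).symm
  refine and_congr ⟨fun hV a b hab => ?_, fun hW a b hab => ?_⟩ (forall_congr' fun j => ?_)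
  · simpa only [hcomap] using comap_mono (f := ψ) (hV hab)
  · exact sup_le_sup (map_mono (hW hab)) (lineFrom_mono hab)
  · simp only [hdim, hsum, add_left_inj]

theorem IsSplitAt.map_comap_sup_lineFrom {V : Fin m → Submodule F (Fin n → F)}
    (hsup : LinearMap.range ψ ⊔ L = ⊤) (h : IsSplitAt (LinearMap.range ψ) L V i) (j : Fin m) :
    map ψ ((V j).comap ψ) ⊔ lineFrom L i j = V j :=
  map_comap_sup_of_le (h.lineFrom_le j) (h.le_sup_lineFrom hsup j)

theorem isSplitAt_map_sup_lineFrom (W : Fin m → Submodule F (Fin k → F)) :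
    IsSplitAt (LinearMap.range ψ) L (fun j => map ψ (W j) ⊔ lineFrom L i j) i := by
  refine ⟨fun j hj => ?_, fun j hj => ?_⟩
  · simpa [lineFrom, not_le.mpr hj] using LinearMap.map_le_range
  · simp [lineFrom, hj]

theorem card_isSplitAt_eq (hψ : Function.Injective ψ) (hL : Disjoint L (LinearMap.range ψ))
    (hsup : LinearMap.range ψ ⊔ L = ⊤) (hL1 : finrank F L = 1) (hi : 0 < α i) :
    Nat.card {V : Fin m → Submodule F (Fin n → F) //
        IsFlag α V ∧ IsSplitAt (LinearMap.range ψ) L V i} =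
      Nat.card {W : Fin m → Submodule F (Fin k → F) //
        IsFlag (fun j => if j = i then α j - 1 else α j) W} :=
  Nat.card_congr
    { toFun V := ⟨fun j => (V.1 j).comap ψ, (isFlag_map_sup_lineFrom_iff hψ hL hL1 hi _).mp <| by
        simpa only [V.2.2.map_comap_sup_lineFrom hsup] using V.2.1⟩
      invFun W := ⟨fun j => map ψ (W.1 j) ⊔ lineFrom L i j,
        (isFlag_map_sup_lineFrom_iff hψ hL hL1 hi _).mpr W.2, isSplitAt_map_sup_lineFrom _⟩
      left_inv V := Subtype.ext <| funext <| V.2.2.map_comap_sup_lineFrom hsup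
      right_inv W := Subtype.ext <| funext fun j =>
        comap_map_sup_of_disjoint hψ (disjoint_lineFrom hL j) _ }

end Flags

/-- Let `t ∈ GL_n(F_q)` be a semisimple reflection fixing the hyperplane `H`
pointwise, with `det(t)`-eigenline `L` (`det t ≠ 1`), and let `α` be a
composition of `n`.  An `α`-flag is stabilized by `t` iff there is an index `i`
such that `V_j ⊆ H` for `j < i` and `L ⊆ V_j` for `j ≥ i`.  Consequently the
number of `t`-stable `α`-flags equals `Σ_{i=1}^m [n-1 choose α - e_i]_q`, where
the `q`-multinomial `[n-1 choose α-e_i]_q` counts `(α-e_i)`-flags in `F_q^{n-1}`. -/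
theorem stmt6 (F : Type*) [Field F] [Fintype F] (n m : ℕ)
    (t : GL (Fin n) F) (H L : Submodule F (Fin n → F))
    (hH : Module.finrank F H = n - 1)
    (hfix : ∀ v ∈ H, Matrix.mulVec (t : Matrix (Fin n) (Fin n) F) v = v)
    (hL : Module.finrank F L = 1)
    (heig : ∀ v ∈ L, Matrix.mulVec (t : Matrix (Fin n) (Fin n) F) v
        = Matrix.det (t : Matrix (Fin n) (Fin n) F) • v)
    (hdet : Matrix.det (t : Matrix (Fin n) (Fin n) F) ≠ 1)
    (α : Fin m → ℕ) (hpos : ∀ i, 0 < α i) (hsum : ∑ i, α i = n) :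
    (∀ V : Fin m → Submodule F (Fin n → F), IsFlag α V →
      ((∀ j, ∀ v ∈ V j, Matrix.mulVec (t : Matrix (Fin n) (Fin n) F) v ∈ V j)
        ↔ ∃ i : Fin m, (∀ j, j < i → V j ≤ H) ∧ (∀ j, i ≤ j → L ≤ V j)))
    ∧ Nat.card {V : Fin m → Submodule F (Fin n → F) // IsFlag α V ∧
          ∀ j, ∀ v ∈ V j, Matrix.mulVec (t : Matrix (Fin n) (Fin n) F) v ∈ V j}
      = ∑ i : Fin m,
          Nat.card {W : Fin m → Submodule F (Fin (n - 1) → F) //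
            IsFlag (fun j => if j = i then α j - 1 else α j) W} := by
  set T := (t : Matrix (Fin n) (Fin n) F).mulVecLin
  have hn : 1 ≤ n := by simpa [hL] using L.finrank_le
  have hm : 0 < m := Nat.pos_of_ne_zero <| by rintro rfl; simp at hsum; omega
  obtain ⟨jmax, hjmax⟩ : ∃ j : Fin m, ∀ i, i ≤ j :=
    ⟨⟨m - 1, by omega⟩, fun i => Fin.mk_le_mk.mpr (by omega)⟩
  have hatom : IsAtom L := isAtom_iff_finrank_eq_one.mpr hL
  have hdisj : Disjoint H L := disjoint_of_fixed_of_eigen (T := T) hdet hfix heig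
  have hsup : H ⊔ L = ⊤ := eq_top_of_disjoint H L (by simp [hH, hL]; omega) hdisj
  have hstable : ∀ V, IsFlag α V →
      ((∀ j, ∀ v ∈ V j, T v ∈ V j) ↔ ∃ i, IsSplitAt H L V i) := fun V hV =>
    forall_mem_apply_mem_iff_exists_isSplitAt hV.1 ⟨jmax, hV.eq_top hsum hjmax⟩ hdet hsup hatom
      hfix heig
  refine ⟨hstable, ?_⟩
  obtain ⟨ψ, hψ, rfl⟩ := exists_injective_range_eq hH
  calc _ = Nat.card {V // ∃ i, IsFlag α V ∧ IsSplitAt (LinearMap.range ψ) L V i} :=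
        Nat.card_congr <| Equiv.subtypeEquivRight fun V => by
          rw [exists_and_left]
          exact and_congr_right (hstable V)
    _ = _ := Nat.card_subtype_exists_eq_sum _ fun V i i' h h' =>
        h.2.unique (fun hLH => hatom.1 (hdisj.symm.eq_bot_of_le hLH)) h'.2
    _ = _ := Finset.sum_congr rfl fun i _ =>
        card_isSplitAt_eq hψ hdisj.symm hsup hL (hpos i)
end

section
/- Equivalence of counting formulas: for all integers n ≥ 2, ℓ ≥ 0, and m with 0 ≤ m ≤ ℓ−1, one has [n]_q^{ℓ−1} Σ_{i=0}^{min(m, ℓ−n)} (−1)^i binom(m,i) [ℓ−i−1 choose n−1]_q = ([n]_q^ℓ/[n]!_q) · [Δ_q^{n−1}((x−1)^m x^{ℓ−m−1})]_{x=1} as rational functions of q. -/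
/-- The Gaussian (q-)binomial coefficient `[n choose k]_q` as a polynomial in `q`. -/
noncomputable def qbinom : ℕ → ℕ → Polynomial ℤ
  | _, 0 => 1
  | 0, _ + 1 => 0
  | n + 1, k + 1 => qbinom n k + Polynomial.X ^ (k + 1) * qbinom n (k + 1)

/-- The q-difference operator `Δ_q f(x) = (f(x) - f(qx))/((1-q)x)`. -/
noncomputable def qdiff {K : Type*} [Field K] (q : K) (f : K → K) : K → K :=
  fun x => (f x - f (q * x)) / ((1 - q) * x)

/-- `[n]_q = 1 + q + ⋯ + q^{n-1}` in the field of rational functions, `q = X`. -/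
noncomputable def nq (n : ℕ) : RatFunc ℚ := ∑ i ∈ Finset.range n, RatFunc.X ^ i

open Finset

lemma nq_zero : nq 0 = 0 := by simp [nq]

lemma nq_eq_map (j : ℕ) :
    nq j = algebraMap (Polynomial ℚ) (RatFunc ℚ) (∑ i ∈ range j, Polynomial.X ^ i) := by
  simp [nq, map_sum, map_pow, RatFunc.algebraMap_X]

lemma nq_ne_zero {j : ℕ} (hj : 1 ≤ j) : nq j ≠ 0 := by
  rw [nq_eq_map]
  intro h
  have h2 : (∑ i ∈ range j, Polynomial.X ^ i : Polynomial ℚ) = 0 := by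
    apply IsFractionRing.injective (Polynomial ℚ) (RatFunc ℚ)
    rw [map_zero]; exact h
  have h3 := congrArg (Polynomial.eval 1) h2
  simp [Polynomial.eval_finset_sum] at h3
  have : j = 0 := by exact_mod_cast h3
  omega

lemma one_sub_X_ne_zero : (1 - RatFunc.X : RatFunc ℚ) ≠ 0 := by
  intro h
  have hx : (RatFunc.X : RatFunc ℚ) = 1 := by linear_combination -h
  rw [← RatFunc.algebraMap_X, ← map_one (algebraMap (Polynomial ℚ) (RatFunc ℚ))] at hx
  have := IsFractionRing.injective (Polynomial ℚ) (RatFunc ℚ) hx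
  simpa using congrArg (Polynomial.eval 0) this

lemma nq_mul_one_sub (j : ℕ) : nq j * (1 - RatFunc.X) = 1 - RatFunc.X ^ j := by
  have := geom_sum_mul (RatFunc.X : RatFunc ℚ) j
  rw [nq]
  linear_combination -this

lemma nq_add (p r : ℕ) : nq (p + r) = nq p + RatFunc.X ^ p * nq r := by
  induction r with
  | zero => simp [nq_zero]
  | succ r ih =>
      have h1 : nq (p + (r + 1)) = nq (p + r) + RatFunc.X ^ (p + r) := by
        rw [show p + (r + 1) = (p + r) + 1 by ring, nq, nq, Finset.sum_range_succ]
      have h2 : nq (r + 1) = nq r + RatFunc.X ^ r := by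
        rw [nq, nq, Finset.sum_range_succ]
      rw [h1, ih, h2, pow_add]; ring

/-- Key identity: `[b]!_q ⬝ [a choose b]_q = [a][a-1]⋯[a-b+1]`. -/
lemma qbinom_fact (a b : ℕ) :
    (∏ k ∈ range b, nq (k + 1)) * Polynomial.aeval RatFunc.X (qbinom a b)
      = ∏ t ∈ range b, nq (a - t) := by
  induction a generalizing b with
  | zero =>
      cases b with
      | zero => simp [qbinom]
      | succ b =>
          rw [show qbinom 0 (b + 1) = 0 from rfl]
          rw [Finset.prod_range_succ' (fun t => nq (0 - t))]
          simp [nq_zero]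
  | succ a ih =>
      cases b with
      | zero => simp [qbinom]
      | succ b =>
          rw [show qbinom (a + 1) (b + 1)
              = qbinom a b + Polynomial.X ^ (b + 1) * qbinom a (b + 1) from rfl]
          rw [map_add, map_mul, map_pow, Polynomial.aeval_X]
          have hGa : ∏ t ∈ range (b + 1), nq (a + 1 - t)
              = nq (a + 1) * ∏ t ∈ range b, nq (a - t) := by
            rw [Finset.prod_range_succ' (fun t => nq (a + 1 - t))]
            have he : ∀ t, a + 1 - (t + 1) = a - t := fun t => by omega
            simp only [he, Nat.sub_zero]
            ring
          have hfact : ∏ k ∈ range (b + 1), nq (k + 1)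
              = (∏ k ∈ range b, nq (k + 1)) * nq (b + 1) := Finset.prod_range_succ _ _
          rw [mul_add, hGa]
          rw [show (∏ k ∈ range (b+1), nq (k+1)) * (Polynomial.aeval RatFunc.X (qbinom a b))
              = nq (b+1) * ((∏ k ∈ range b, nq (k+1)) * Polynomial.aeval RatFunc.X (qbinom a b))
              by rw [hfact]; ring, ih b]
          rw [show (∏ k ∈ range (b+1), nq (k+1)) *
                (RatFunc.X ^ (b+1) * Polynomial.aeval RatFunc.X (qbinom a (b+1)))
              = RatFunc.X ^ (b+1) *
                ((∏ k ∈ range (b+1), nq (k+1)) * Polynomial.aeval RatFunc.X (qbinom a (b+1)))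
              by ring, ih (b + 1)]
          by_cases hba : b ≤ a
          · have hsplit : nq (a + 1) = nq (b + 1) + RatFunc.X ^ (b + 1) * nq (a - b) := by
              rw [show a + 1 = (b + 1) + (a - b) by omega, nq_add]
            rw [hsplit, Finset.prod_range_succ (fun t => nq (a - t))]
            ring
          · have hz : ∏ t ∈ range b, nq (a - t) = 0 := by
              apply Finset.prod_eq_zero (i := a)
              · exact Finset.mem_range.mpr (by omega)
              · simp [nq_zero]
            rw [Finset.prod_range_succ (fun t => nq (a - t)), hz]
            ring

lemma qdiff_iter_sum {ι : Type*} (s : Finset ι) (f : ι → RatFunc ℚ → RatFunc ℚ) (k : ℕ) :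
    ∀ x : RatFunc ℚ,
      (qdiff RatFunc.X)^[k] (fun y => ∑ j ∈ s, f j y) x
        = ∑ j ∈ s, (qdiff RatFunc.X)^[k] (f j) x := by
  induction k with
  | zero => intro x; simp
  | succ k ih =>
      intro x
      rw [Function.iterate_succ_apply']
      simp only [qdiff, ih, Function.iterate_succ_apply']
      rw [← Finset.sum_sub_distrib, Finset.sum_div]

lemma qdiff_iter_monomial (c : RatFunc ℚ) (e : ℕ) (k : ℕ) :
    ∀ x : RatFunc ℚ, x ≠ 0 →
      (qdiff RatFunc.X)^[k] (fun y => c * y ^ e) x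
        = c * (∏ t ∈ range k, nq (e - t)) * x ^ (e - k) := by
  induction k with
  | zero => intro x hx; simp
  | succ k ih =>
      intro x hx
      rw [Function.iterate_succ_apply']
      have hx' : RatFunc.X * x ≠ 0 := mul_ne_zero RatFunc.X_ne_zero hx
      rw [qdiff, ih x hx, ih (RatFunc.X * x) hx', mul_pow]
      rw [Finset.prod_range_succ (fun t => nq (e - t))]
      have hnum : c * (∏ t ∈ range k, nq (e - t)) * x ^ (e - k)
            - c * (∏ t ∈ range k, nq (e - t)) * (RatFunc.X ^ (e - k) * x ^ (e - k))
          = c * (∏ t ∈ range k, nq (e - t)) * (nq (e - k) * (1 - RatFunc.X)) * x ^ (e - k) := by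
        rw [nq_mul_one_sub]; ring
      rw [hnum]
      rcases Nat.eq_zero_or_pos (e - k) with h0 | hpos
      · rw [h0, nq_zero, show e - (k + 1) = 0 by omega]
        ring
      · have he : e - k = (e - (k + 1)) + 1 := by omega
        rw [he, pow_succ]
        rw [div_eq_iff (mul_ne_zero one_sub_X_ne_zero hx)]
        ring

lemma expand_fun (m d : ℕ) :
    (fun x : RatFunc ℚ => (x - 1) ^ m * x ^ d)
      = fun x => ∑ j ∈ range (m + 1),
          ((-1 : RatFunc ℚ) ^ (j + m) * (m.choose j : RatFunc ℚ)) * x ^ (j + d) := by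
  funext x
  rw [sub_pow x 1 m, Finset.sum_mul]
  apply Finset.sum_congr rfl
  intro j hj
  rw [pow_add x j d]
  ring

/-- Equivalence of the two counting formulas for `t_q(n,ℓ,m)`: for `n ≥ 2`,
`0 ≤ m ≤ ℓ - 1`,
`[n]_q^{ℓ-1} Σ_{i=0}^{min(m,ℓ-n)} (-1)^i binom(m,i) [ℓ-i-1 choose n-1]_q
  = ([n]_q^ℓ / [n]!_q) [Δ_q^{n-1}((x-1)^m x^{ℓ-m-1})]_{x=1}`,
as rational functions of `q`. -/
theorem stmt14 (n ℓ m : ℕ) (hn : 2 ≤ n) (hm : m + 1 ≤ ℓ) :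
    (nq n) ^ (ℓ - 1)
        * ∑ i ∈ Finset.range (min m (ℓ - n) + 1),
            (-1 : RatFunc ℚ) ^ i * (m.choose i : RatFunc ℚ)
              * Polynomial.aeval RatFunc.X (qbinom (ℓ - i - 1) (n - 1))
      = ((nq n) ^ ℓ / ∏ k ∈ Finset.range n, nq (k + 1))
          * ((qdiff RatFunc.X)^[n - 1]
              (fun x => (x - 1) ^ m * x ^ (ℓ - m - 1)) 1) := by
  set Fb : RatFunc ℚ := ∏ k ∈ range (n - 1), nq (k + 1) with hFb
  have hFbne : Fb ≠ 0 := by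
    apply Finset.prod_ne_zero_iff.mpr
    intro k _
    exact nq_ne_zero (by omega)
  have hnne : nq n ≠ 0 := nq_ne_zero (by omega)
  set T : ℕ → RatFunc ℚ := fun i =>
    (nq n) ^ (ℓ - 1) * ((-1 : RatFunc ℚ) ^ i * (m.choose i : RatFunc ℚ)
      * ∏ t ∈ range (n - 1), nq (ℓ - i - 1 - t)) with hT
  -- Compute the RHS q-difference value
  have hΔ : (qdiff RatFunc.X)^[n - 1] (fun x => (x - 1) ^ m * x ^ (ℓ - m - 1)) 1
      = ∑ j ∈ range (m + 1),
          ((-1 : RatFunc ℚ) ^ (j + m) * (m.choose j : RatFunc ℚ))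
            * ∏ t ∈ range (n - 1), nq (j + (ℓ - m - 1) - t) := by
    rw [expand_fun m (ℓ - m - 1)]
    rw [qdiff_iter_sum (range (m + 1))
      (fun j => fun x => ((-1 : RatFunc ℚ) ^ (j + m) * (m.choose j : RatFunc ℚ))
        * x ^ (j + (ℓ - m - 1))) (n - 1) 1]
    apply Finset.sum_congr rfl
    intro j _
    rw [qdiff_iter_monomial _ (j + (ℓ - m - 1)) (n - 1) 1 one_ne_zero]
    simp
  apply mul_left_cancel₀ hFbne
  have hLHS : Fb * ((nq n) ^ (ℓ - 1)
        * ∑ i ∈ range (min m (ℓ - n) + 1),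
            (-1 : RatFunc ℚ) ^ i * (m.choose i : RatFunc ℚ)
              * Polynomial.aeval RatFunc.X (qbinom (ℓ - i - 1) (n - 1)))
      = ∑ i ∈ range (m + 1), T i := by
    rw [Finset.mul_sum, Finset.mul_sum]
    trans (∑ i ∈ range (min m (ℓ - n) + 1), T i)
    · apply Finset.sum_congr rfl
      intro i _
      simp only [hT]
      rw [← qbinom_fact (ℓ - i - 1) (n - 1)]
      ring
    · apply Finset.sum_subset (Finset.range_subset_range.mpr (by omega))
      intro i hi hni
      have hi1 : i < m + 1 := Finset.mem_range.mp hi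
      have hi2 : min m (ℓ - n) + 1 ≤ i := by
        by_contra hc
        exact hni (Finset.mem_range.mpr (by omega))
      have hzz : ∏ t ∈ range (n - 1), nq (ℓ - i - 1 - t) = 0 := by
        apply Finset.prod_eq_zero (i := ℓ - i - 1)
        · exact Finset.mem_range.mpr (by omega)
        · simp [nq_zero]
      simp only [hT]
      rw [hzz]
      ring
  rw [hLHS]
  have hcoef : Fb * ((nq n) ^ ℓ / ∏ k ∈ range n, nq (k + 1)) = (nq n) ^ (ℓ - 1) := by
    have hfact : ∏ k ∈ range n, nq (k + 1) = Fb * nq n := by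
      rw [hFb]
      conv_lhs => rw [show n = (n - 1) + 1 by omega]
      rw [Finset.prod_range_succ]
      rw [show n - 1 + 1 = n by omega]
    have hpow : (nq n) ^ ℓ = (nq n) ^ (ℓ - 1) * nq n := by
      rw [← pow_succ, show ℓ - 1 + 1 = ℓ by omega]
    rw [hfact, hpow]
    field_simp
  rw [hΔ, show Fb * (((nq n) ^ ℓ / ∏ k ∈ range n, nq (k + 1))
        * ∑ j ∈ range (m + 1),
          ((-1 : RatFunc ℚ) ^ (j + m) * (m.choose j : RatFunc ℚ))
            * ∏ t ∈ range (n - 1), nq (j + (ℓ - m - 1) - t))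
      = (Fb * ((nq n) ^ ℓ / ∏ k ∈ range n, nq (k + 1)))
        * ∑ j ∈ range (m + 1),
          ((-1 : RatFunc ℚ) ^ (j + m) * (m.choose j : RatFunc ℚ))
            * ∏ t ∈ range (n - 1), nq (j + (ℓ - m - 1) - t) by ring,
    hcoef, Finset.mul_sum]
  rw [← Finset.sum_range_reflect T (m + 1)]
  apply Finset.sum_congr rfl
  intro j hj
  have hjm : j ≤ m := by
    have := Finset.mem_range.mp hj; omega
  simp only [hT]
  rw [show m + 1 - 1 - j = m - j from by omega]
  have h2 : ((m.choose (m - j) : ℕ) : RatFunc ℚ) = ((m.choose j : ℕ) : RatFunc ℚ) := by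
    rw [Nat.choose_symm hjm]
  have h3 : ∀ t, ℓ - (m - j) - 1 - t = j + (ℓ - m - 1) - t := fun t => by omega
  have h4 : ((-1 : RatFunc ℚ)) ^ (m - j) = (-1 : RatFunc ℚ) ^ (j + m) := by
    rw [show j + m = (m - j) + 2 * j by omega, pow_add, pow_mul]
    norm_num
  simp only [h3]
  rw [h2, h4]
end

section
/- Partial fraction identity: n^{n−2} x^{n−1} / ∏_{k=0}^{n−1}(1 − x n((n−1)/2 − k)) = (1/n!) Σ_{k=0}^{n−1} (−1)^k binom(n−1,k) / (1 − x n((n−1)/2 − k)), as an identity of rational functions in x. -/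
/-!
With `c k = n * ((n - 1) / 2 - k)` the nodes are distinct and `c k - c j = n * (j - k)`, so the
Lagrange nodal weights `∏_{j ≠ k} (c k - c j)⁻¹` are `(-1)^k binom(n-1,k) / (n^{n-1} (n-1)!)`.
The partial fraction expansion `1 / ∏ (y - c k) = ∑ w k / (y - c k)` of the nodal polynomial,
taken at `y = 1 / x`, gives the identity since `n^{n-1} (n-1)! = n^{n-2} n!`.
-/

open Finset Polynomial Nat

namespace Lagrange

variable {F ι : Type*} [Field F] [DecidableEq ι] {s : Finset ι} {v : ι → F}

theorem sum_nodalWeight_div_sub (hvs : Set.InjOn v s) (hs : s.Nonempty) {y : F}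
    (hy : ∀ i ∈ s, y ≠ v i) :
    ∑ i ∈ s, nodalWeight s v i / (y - v i) = (∏ i ∈ s, (y - v i))⁻¹ := by
  have h := eval_interpolate_not_at_node 1 hy
  rw [interpolate_one hvs hs, eval_one, eval_nodal] at h
  simpa [div_eq_mul_inv] using (eq_inv_of_mul_eq_one_right h.symm)

theorem sum_nodalWeight_div_one_sub_mul (hvs : Set.InjOn v s) (hs : s.Nonempty) {x : F}
    (hx : x ≠ 0) (hxv : ∀ i ∈ s, 1 - x * v i ≠ 0) :
    ∑ i ∈ s, nodalWeight s v i / (1 - x * v i) = x ^ (#s - 1) / ∏ i ∈ s, (1 - x * v i) := by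
  have hfactor : ∀ i, 1 - x * v i = x * (x⁻¹ - v i) := fun i => by field_simp
  have hy : ∀ i ∈ s, x⁻¹ ≠ v i := fun i hi h => hxv i hi (by rw [hfactor, h, sub_self, mul_zero])
  have hprod : ∏ i ∈ s, (1 - x * v i) = x ^ #s * ∏ i ∈ s, (x⁻¹ - v i) := by
    simp_rw [hfactor, prod_mul_distrib, prod_const]
  calc ∑ i ∈ s, nodalWeight s v i / (1 - x * v i)
      = (∑ i ∈ s, nodalWeight s v i / (x⁻¹ - v i)) / x := by
        rw [sum_div]; simp_rw [hfactor, div_mul_eq_div_div_swap]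
    _ = x ^ (#s - 1) / ∏ i ∈ s, (1 - x * v i) := by
        rw [sum_nodalWeight_div_sub hvs hs hy, hprod, ← Nat.sub_add_cancel hs.card_pos, pow_succ,
          Nat.add_sub_cancel]
        field_simp

end Lagrange

theorem prod_range_erase_natCast_sub {R : Type*} [CommRing R] {n k : ℕ} (hk : k < n) :
    ∏ j ∈ (range n).erase k, ((j : R) - k) = (-1) ^ k * k ! * (n - 1 - k)! := by
  have hsplit : (range n).erase k = range k ∪ Ico (k + 1) n := by
    ext j; simp only [mem_erase, mem_range, mem_union, mem_Ico]; omega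
  have hdisj : Disjoint (range k) (Ico (k + 1) n) := by
    simp only [disjoint_left, mem_range, mem_Ico]; omega
  have hbelow : ∏ j ∈ range k, ((j : R) - k) = (-1) ^ k * k ! := by
    calc ∏ j ∈ range k, ((j : R) - k) = ∏ j ∈ range k, (-1) * ((k - j : ℕ) : R) := by
          refine prod_congr rfl fun j hj => ?_
          rw [Nat.cast_sub (mem_range.mp hj).le]; ring
      _ = (-1) ^ k * k ! := by
          rw [prod_mul_distrib, prod_const, card_range, ← Nat.cast_prod,
            ← Nat.descFactorial_eq_prod_range, Nat.descFactorial_self]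
  have habove : ∏ j ∈ Ico (k + 1) n, ((j : R) - k) = (n - 1 - k)! := by
    rw [prod_Ico_eq_prod_range, show n - (k + 1) = n - 1 - k by omega,
      ← prod_range_add_one_eq_factorial, Nat.cast_prod]
    refine prod_congr rfl fun i _ => ?_
    push_cast; ring
  rw [hsplit, prod_union hdisj, hbelow, habove]

section ArithmeticProgression

variable {K : Type*} [Field K] [CharZero K] {n : ℕ} {a b : K}

theorem Lagrange.nodalWeight_range_mul_sub (ha : a ≠ 0) {k : ℕ} (hk : k < n) :
    Lagrange.nodalWeight (range n) (fun j : ℕ => a * (b - j)) k =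
      (-1) ^ k * (n - 1).choose k / (a ^ (n - 1) * (n - 1)!) := by
  have hsub : ∀ j : ℕ, a * (b - k) - a * (b - j) = a * (j - k) := fun j => by ring
  simp only [Lagrange.nodalWeight, hsub, prod_inv_distrib, prod_mul_distrib, prod_const,
    card_erase_of_mem (mem_range.mpr hk), card_range, prod_range_erase_natCast_sub hk]
  rw [Nat.cast_choose K (by omega : k ≤ n - 1)]
  have hsq : ((-1 : K) ^ k) ^ 2 = 1 := by rw [← pow_mul, mul_comm, pow_mul]; norm_num
  field_simp [Nat.cast_ne_zero.mpr (Nat.factorial_ne_zero _)]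
  linear_combination -hsq

theorem sum_neg_one_pow_mul_choose_div_one_sub_mul (hn : 1 ≤ n) (ha : a ≠ 0) {x : K}
    (hx : x ≠ 0) (hxv : ∀ k < n, 1 - x * (a * (b - k)) ≠ 0) :
    ∑ k ∈ range n, (-1) ^ k * (n - 1).choose k / (1 - x * (a * (b - k))) =
      a ^ (n - 1) * (n - 1)! * x ^ (n - 1) / ∏ k ∈ range n, (1 - x * (a * (b - k))) := by
  have hinj : Set.InjOn (fun j : ℕ => a * (b - j)) (range n) := fun i _ j _ hij => by
    simpa using mul_left_cancel₀ ha hij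
  have hweights := Lagrange.sum_nodalWeight_div_one_sub_mul hinj (nonempty_range_iff.mpr
    (by omega)) hx (fun k hk => hxv k (mem_range.mp hk))
  rw [card_range] at hweights
  calc ∑ k ∈ range n, (-1) ^ k * (n - 1).choose k / (1 - x * (a * (b - k)))
      = a ^ (n - 1) * (n - 1)! *
          ∑ k ∈ range n, Lagrange.nodalWeight (range n) (fun j : ℕ => a * (b - j)) k /
            (1 - x * (a * (b - k))) := by
        rw [mul_sum]
        refine sum_congr rfl fun k hk => ?_
        rw [Lagrange.nodalWeight_range_mul_sub ha (mem_range.mp hk)]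
        field_simp [Nat.cast_ne_zero.mpr (Nat.factorial_ne_zero _)]
    _ = _ := by rw [hweights, mul_div_assoc]

end ArithmeticProgression

theorem RatFunc.one_sub_X_mul_C_ne_zero {K : Type*} [Field K] (q : K) :
    (1 - RatFunc.X * RatFunc.C q : RatFunc K) ≠ 0 := by
  have hpoly : (1 - Polynomial.X * Polynomial.C q : K[X]) ≠ 0 := fun h => by
    simpa using congrArg (Polynomial.eval 0) h
  simpa only [map_sub, map_one, map_mul, RatFunc.algebraMap_X, RatFunc.algebraMap_C] using
    RatFunc.algebraMap_ne_zero hpoly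

/-- The partial fraction expansion
`n^{n-2} x^{n-1} / ∏_{k=0}^{n-1} (1 - x n((n-1)/2 - k))
  = (1/n!) Σ_{k=0}^{n-1} (-1)^k binom(n-1,k) / (1 - x n((n-1)/2 - k))`,
as an identity of rational functions in `x` over `ℚ` (here `x = X`). -/
theorem stmt15 (n : ℕ) (hn : 1 ≤ n) :
    ((n : RatFunc ℚ) ^ (n - 2) * RatFunc.X ^ (n - 1))
        / ∏ k ∈ Finset.range n,
            (1 - RatFunc.X * RatFunc.C ((n : ℚ) * (((n : ℚ) - 1) / 2 - (k : ℚ))))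
      = (1 / (n.factorial : RatFunc ℚ))
          * ∑ k ∈ Finset.range n,
              ((-1 : RatFunc ℚ) ^ k * ((n - 1).choose k : RatFunc ℚ))
                / (1 - RatFunc.X * RatFunc.C ((n : ℚ) * (((n : ℚ) - 1) / 2 - (k : ℚ)))) := by
  have hC : ∀ k : ℕ, RatFunc.C ((n : ℚ) * (((n : ℚ) - 1) / 2 - (k : ℚ))) =
      (n : RatFunc ℚ) * (((n : RatFunc ℚ) - 1) / 2 - (k : RatFunc ℚ)) := fun k => by simp
  have hden : ∀ k < n,
      1 - RatFunc.X * ((n : RatFunc ℚ) * (((n : RatFunc ℚ) - 1) / 2 - (k : RatFunc ℚ))) ≠ 0 :=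
    fun k _ => hC k ▸ RatFunc.one_sub_X_mul_C_ne_zero _
  have hfact : (n : RatFunc ℚ) ^ (n - 1) * (n - 1)! = n ^ (n - 2) * n ! := by
    obtain ⟨m, rfl⟩ := Nat.exists_eq_add_of_le' hn
    cases m with
    | zero => simp
    | succ m => push_cast [Nat.factorial_succ (m + 1)]; ring
  simp only [hC]
  rw [sum_neg_one_pow_mul_choose_div_one_sub_mul hn (by exact_mod_cast (by omega : n ≠ 0))
    RatFunc.X_ne_zero hden, hfact]
  field_simp [Nat.cast_ne_zero.mpr (Nat.factorial_ne_zero n)]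
end
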